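/- Let G be a finite abelian group of order n, σ ∈ G of order m, and 0 ≤ i < m an integer. For a character χ of G, let u_{χ,σ} be the unique integer with 0 ≤ u_{χ,σ} < m and χ(σ) = e^{2πi·u_{χ,σ}/m}. Then the number of characters χ of G with u_{χ,σ} > i equals (n/m)·(m-1-i). -/

import Mathlib

/-!
Evaluation at `σ` is a homomorphism `Ĝ →* ℂˣ` with image exactly the group `μ_m` of `m`-th roots
of unity: the image lies in `μ_m`, and its order `r` is a multiple of `m` because `χ (σ ^ r) = 1`
for every character `χ`, so `σ ^ r = 1` as characters separate points. Since `|Ĝ| = n`, every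
fibre over `μ_m` has `n / m` elements, and the characters in question are the preimage of the
`m - 1 - i` roots `ζ ^ u` with `i < u < m`, where `ζ = e^{2πi/m}`.
-/
theorem MonoidHom.natCard_preimage_of_subset_range {A B : Type*} [Group A] [Group B] [Finite A]
    (f : A →* B) {S : Set B} (hS : S ⊆ Set.range f) :
    Nat.card (f ⁻¹' S) = Nat.card S * Nat.card f.ker := by
  have : Finite S := (Set.finite_range f).subset hS
  have := Fintype.ofFinite S
  let e : (Σ s : S, f ⁻¹' {(s : B)}) ≃ f ⁻¹' S :=
    { toFun := fun p => ⟨p.2, by rw [Set.mem_preimage, (p.2.2 : f p.2 = p.1)]; exact p.1.2⟩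
      invFun := fun a => ⟨⟨f a, a.2⟩, ⟨a, rfl⟩⟩
      left_inv := by
        rintro ⟨⟨s, hs⟩, ⟨a, ha⟩⟩
        obtain rfl : f a = s := ha
        rfl
      right_inv := fun _ => rfl }
  rw [← Nat.card_congr e, Nat.card_sigma, Finset.sum_const_nat (m := Nat.card f.ker),
    Finset.card_univ, Fintype.card_eq_nat_card]
  rintro ⟨s, hs⟩ -
  obtain ⟨a, rfl⟩ := hS hs
  exact Nat.card_congr (f.fiberEquivKer a)

theorem IsPrimitiveRoot.natCard_image_pow_Ico {M : Type*} [CommMonoid M] {ζ : M} {k : ℕ}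
    (hζ : IsPrimitiveRoot ζ k) (a : ℕ) :
    Nat.card ((ζ ^ ·) '' Set.Ico a k) = k - a := by
  rw [Nat.card_coe_set_eq, Set.InjOn.ncard_image, Set.ncard_Ico_nat]
  exact fun u hu v hv ↦ hζ.pow_inj hu.2 hv.2

namespace CommGroup

variable {G M : Type*} [CommGroup G] [Finite G] [CommMonoid M]
  [HasEnoughRootsOfUnity M (Monoid.exponent G)]

theorem range_eval_eq_rootsOfUnity (σ : G) :
    (MonoidHom.eval σ : (G →* Mˣ) →* Mˣ).range = rootsOfUnity (orderOf σ) M := by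
  have : NeZero (orderOf σ) := ⟨(orderOf_pos σ).ne'⟩
  have : HasEnoughRootsOfUnity M (orderOf σ) :=
    HasEnoughRootsOfUnity.of_dvd M (Monoid.order_dvd_exponent σ)
  have hle : (MonoidHom.eval σ : (G →* Mˣ) →* Mˣ).range ≤ rootsOfUnity (orderOf σ) M := by
    rintro _ ⟨χ, rfl⟩
    rw [mem_rootsOfUnity, MonoidHom.eval_apply_apply, ← map_pow, pow_orderOf_eq_one, map_one]
  have : Finite (G →* Mˣ) := Nat.finite_of_card_ne_zero <| by
    rw [card_monoidHom_of_hasEnoughRootsOfUnity]; exact Nat.card_pos.ne'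
  have : Finite (MonoidHom.eval σ : (G →* Mˣ) →* Mˣ).range :=
    Finite.of_surjective _ (MonoidHom.rangeRestrict_surjective _)
  refine Subgroup.eq_of_le_of_card_ge hle ?_
  rw [HasEnoughRootsOfUnity.natCard_rootsOfUnity]
  refine Nat.le_of_dvd Nat.card_pos (orderOf_dvd_of_pow_eq_one ?_)
  rw [← forall_apply_eq_apply_iff (G := G) (M := M)]
  intro χ
  have hχ : χ σ ∈ (MonoidHom.eval σ : (G →* Mˣ) →* Mˣ).range := ⟨χ, rfl⟩
  rw [map_pow, map_one]
  exact congrArg Subtype.val (pow_card_eq_one' (x := (⟨χ σ, hχ⟩ : _)))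

theorem natCard_ker_eval (σ : G) :
    Nat.card (MonoidHom.eval σ : (G →* Mˣ) →* Mˣ).ker = Nat.card G / orderOf σ := by
  have : NeZero (orderOf σ) := ⟨(orderOf_pos σ).ne'⟩
  have : HasEnoughRootsOfUnity M (orderOf σ) :=
    HasEnoughRootsOfUnity.of_dvd M (Monoid.order_dvd_exponent σ)
  rw [← card_monoidHom_of_hasEnoughRootsOfUnity G M,
    ← (MonoidHom.eval σ : (G →* Mˣ) →* Mˣ).ker.card_mul_index, Subgroup.index_ker,
    range_eval_eq_rootsOfUnity, HasEnoughRootsOfUnity.natCard_rootsOfUnity,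
    Nat.mul_div_cancel _ (orderOf_pos σ)]

end CommGroup

theorem card_characters_with_large_u_general {G : Type*} [CommGroup G] [Finite G] (σ : G) (i : ℕ) :
    Nat.card {χ : G →* ℂˣ // ∃ u : ℕ, i < u ∧ u < orderOf σ ∧
        (χ σ : ℂ) = Complex.exp (2 * Real.pi * Complex.I * u / orderOf σ)}
      = (Nat.card G / orderOf σ) * (orderOf σ - 1 - i) := by
  set m := orderOf σ
  have hm : m ≠ 0 := (orderOf_pos σ).ne'
  have hω := Complex.isPrimitiveRoot_exp m hm
  set ζ : ℂˣ := (hω.isUnit hm).unit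
  have hζ : IsPrimitiveRoot ζ m := hω.isUnit_unit hm
  have hexp (u : ℕ) : Complex.exp (2 * Real.pi * Complex.I * u / m) = ((ζ ^ u : ℂˣ) : ℂ) := by
    rw [Units.val_pow_eq_pow_val, IsUnit.unit_spec, ← Complex.exp_nat_mul]
    ring_nf
  let S : Set ℂˣ := (ζ ^ ·) '' Set.Ico (i + 1) m
  have hS : S ⊆ Set.range (MonoidHom.eval σ) := by
    rw [← MonoidHom.coe_range, CommGroup.range_eval_eq_rootsOfUnity]
    rintro _ ⟨u, -, rfl⟩
    show ζ ^ u ∈ rootsOfUnity m ℂ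
    rw [mem_rootsOfUnity, ← pow_mul, mul_comm, pow_mul, hζ.pow_eq_one, one_pow]
  have hpre : ∀ χ : G →* ℂˣ, (∃ u : ℕ, i < u ∧ u < m ∧
      (χ σ : ℂ) = Complex.exp (2 * Real.pi * Complex.I * u / m)) ↔
      χ ∈ MonoidHom.eval σ ⁻¹' S := by
    intro χ
    simp only [S, Set.mem_preimage, Set.mem_image, Set.mem_Ico, MonoidHom.eval_apply_apply, hexp,
      Units.val_inj, Nat.succ_le_iff, and_assoc, eq_comm]
  rw [Nat.card_congr (Equiv.subtypeEquivRight hpre),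
    MonoidHom.natCard_preimage_of_subset_range _ hS, hζ.natCard_image_pow_Ico,
    CommGroup.natCard_ker_eval, mul_comm, Nat.sub_sub, add_comm]

/-- For a finite abelian group `G` of order `n`, `σ ∈ G` of order `m` and `0 ≤ i < m`, the
number of characters `χ` of `G` with `u_{χ,σ} > i` (where `0 ≤ u_{χ,σ} < m` and
`χ(σ) = e^{2πi·u_{χ,σ}/m}`) equals `(n/m)·(m-1-i)`. -/
theorem card_characters_with_large_u {G : Type*} [CommGroup G] [Finite G] (σ : G) (i : ℕ)
    (hi : i < orderOf σ) :
    Nat.card {χ : G →* ℂˣ // ∃ u : ℕ, i < u ∧ u < orderOf σ ∧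
        (χ σ : ℂ) = Complex.exp (2 * Real.pi * Complex.I * u / orderOf σ)}
      = (Nat.card G / orderOf σ) * (orderOf σ - 1 - i) :=
  card_characters_with_large_u_general σ i
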